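/- Assume P is infinite and P \ Pa is finite for every a ∈ P. Let ρ be a right injective action of P on a second-countable compact Hausdorff space X (each ρ_a continuous injective, ρ_e = id, ρ_a ∘ ρ_b = ρ_{ba}) with ρ_a(X) open in X for every a ∈ P. Suppose: (i) there exists a unique point x_∞ ∈ X with Q_{x_∞} = G; and (ii) there exists x₀ ∈ X such that the map a ∈ P ↦ ρ_a(x₀) is injective and has dense range in X. Then the map Λ : P_∞ → X defined by Λ(a) = ρ_a(x₀) for a ∈ P and Λ(∞) = x_∞ is a homeomorphism satisfying ρ_a ∘ Λ = Λ ∘ σ_a for every a ∈ P; in particular, ρ_a(x_∞) = x_∞ for all a ∈ P, and the actions P ↷_σ P_∞ and P ↷_ρ X are conjugate. -/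

import Mathlib

/-!
The points lying in every image `ρ_c(X)`, `c ∈ P`, are exactly those with `Q_x = G`, so this
common part of the images is `{x_∞}`. Each `ρ_a` maps it into itself, so `x_∞` is fixed, and
then the injective orbit of `x₀` never meets `x_∞`. Since `P \ Pa` is finite, any two right
translates `Pa`, `Pb` meet, so the compact sets `ρ_c(X)` form a downward directed family; by
compactness every neighbourhood of `x_∞` contains some `ρ_c(X)`, hence all but finitely many
orbit points `ρ_b(x₀)`. Thus `Λ` is continuous on the compact space `P_∞`, and being injective
with dense range it is a homeomorphism onto the Hausdorff space `X`.
-/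

/-- `Q_x`: the set of `g ∈ G` expressible as `a * b⁻¹` with `a, b ∈ P` such that
`ρ_a x = ρ_b y` for some `y ∈ X`. -/
def Qset {G X : Type*} [Group G] (P : Set G) (ρ : G → X → X) (x : X) : Set G :=
  {g : G | ∃ a ∈ P, ∃ b ∈ P, ∃ y : X, g = a * b⁻¹ ∧ ρ a x = ρ b y}

open Filter Topology OnePoint

theorem exists_mul_eq_mul_of_finite_diff {G : Type*} [Mul G] {P : Set G} (hP : P.Infinite)
    {a b : G} (ha : (P \ ((· * a) '' P)).Finite) (hb : (P \ ((· * b) '' P)).Finite) :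
    ∃ p ∈ P, ∃ q ∈ P, p * a = q * b := by
  obtain ⟨x, hxP, hx⟩ := (hP.sdiff (ha.union hb)).nonempty
  simp only [Set.mem_union, Set.mem_sdiff, hxP, true_and, not_or, not_not] at hx
  obtain ⟨⟨p, hp, rfl⟩, ⟨q, hq, hpq⟩⟩ := hx
  exact ⟨p, hp, q, hq, hpq.symm⟩

theorem OnePoint.exists_homeomorph_of_tendsto_cofinite {X Y : Type*} [TopologicalSpace X]
    [DiscreteTopology X] [TopologicalSpace Y] [T2Space Y] {f : X → Y} {y : Y}
    (hf : Function.Injective f) (hdense : DenseRange f) (hy : y ∉ Set.range f)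
    (htend : Tendsto f cofinite (𝓝 y)) :
    ∃ Λ : OnePoint X ≃ₜ Y, (∀ x : X, Λ x = f x) ∧ Λ ∞ = y := by
  set g : OnePoint X → Y := fun p => p.elim y f
  have hg : Continuous g := (continuous_iff_from_discrete g).2 htend
  have hinj : Function.Injective g := by
    rintro (_ | x) (_ | x') h
    · rfl
    · exact absurd ⟨x', h.symm⟩ hy
    · exact absurd ⟨x, h⟩ hy
    · exact congrArg _ (hf h)
  have hsurj : Function.Surjective g := by
    have hclosed : IsClosed (Set.range g) := (isCompact_range hg).isClosed
    have hrange : Dense (Set.range g) :=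
      hdense.mono (Set.range_subset_iff.2 fun x => ⟨(x : OnePoint X), rfl⟩ :
        Set.range f ⊆ Set.range g)
    rw [← Set.range_eq_univ, ← hclosed.closure_eq, hrange.closure_eq]
  exact ⟨(show Continuous (Equiv.ofBijective g ⟨hinj, hsurj⟩) from hg).homeoOfEquivCompactToT2,
    fun _ => rfl, rfl⟩

section RightAction

variable {G X : Type*} [Group G] {P : Set G} {ρ : G → X → X}

def commonRange (P : Set G) (ρ : G → X → X) : Set X :=
  ⋂ c ∈ P, Set.range (ρ c)

theorem range_mul_subset (hρm : ∀ a ∈ P, ∀ b ∈ P, ∀ x : X, ρ a (ρ b x) = ρ (b * a) x)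
    {c d : G} (hc : c ∈ P) (hd : d ∈ P) : Set.range (ρ (d * c)) ⊆ Set.range (ρ c) := by
  rintro _ ⟨z, rfl⟩
  exact ⟨ρ d z, hρm c hc d hd z⟩

theorem mem_commonRange_of_Qset_eq_univ (hρi : ∀ a ∈ P, Function.Injective (ρ a))
    (hρm : ∀ a ∈ P, ∀ b ∈ P, ∀ x : X, ρ a (ρ b x) = ρ (b * a) x) {x : X}
    (hx : Qset P ρ x = Set.univ) : x ∈ commonRange P ρ := by
  refine Set.mem_iInter₂.2 fun c hc => ?_
  obtain ⟨a, ha, b, hb, y, hcab, hxy⟩ : c⁻¹ ∈ Qset P ρ x := hx ▸ Set.mem_univ _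
  have hb_eq : b = c * a := by rw [← eq_mul_inv_iff_mul_eq.1 hcab]; group
  refine ⟨y, hρi a ha ?_⟩
  rw [hρm a ha c hc y, ← hb_eq, hxy]

theorem Qset_eq_univ_of_mem_commonRange (hPG : ∀ g : G, ∃ a ∈ P, ∃ b ∈ P, g = a * b⁻¹)
    (hore : ∀ a ∈ P, ∀ b ∈ P, ∃ p ∈ P, ∃ q ∈ P, p * a = q * b)
    (hρm : ∀ a ∈ P, ∀ b ∈ P, ∀ x : X, ρ a (ρ b x) = ρ (b * a) x) {x : X}
    (hx : x ∈ commonRange P ρ) : Qset P ρ x = Set.univ := by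
  refine Set.eq_univ_of_forall fun g => ?_
  obtain ⟨a, ha, b, hb, rfl⟩ := hPG g
  obtain ⟨p, hp, q, hq, hpq⟩ := hore a ha b hb
  obtain ⟨z, rfl⟩ := Set.mem_iInter₂.1 hx p hp
  refine ⟨a, ha, b, hb, ρ q z, rfl, ?_⟩
  rw [hρm a ha p hp z, hpq, hρm b hb q hq z]

theorem mapsTo_commonRange (hore : ∀ a ∈ P, ∀ b ∈ P, ∃ p ∈ P, ∃ q ∈ P, p * a = q * b)
    (hρm : ∀ a ∈ P, ∀ b ∈ P, ∀ x : X, ρ a (ρ b x) = ρ (b * a) x) {a : G} (ha : a ∈ P) :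
    Set.MapsTo (ρ a) (commonRange P ρ) (commonRange P ρ) := by
  intro x hx
  refine Set.mem_iInter₂.2 fun c hc => ?_
  obtain ⟨p, hp, q, hq, hpq⟩ := hore c hc a ha
  obtain ⟨z, rfl⟩ := Set.mem_iInter₂.1 hx q hq
  rw [hρm a ha q hq z, ← hpq]
  exact range_mul_subset hρm hc hp ⟨z, rfl⟩

theorem orbit_ne_of_isFixedPt (hPmul : ∀ a ∈ P, ∀ b ∈ P, a * b ∈ P)
    (hρm : ∀ a ∈ P, ∀ b ∈ P, ∀ x : X, ρ a (ρ b x) = ρ (b * a) x) {x₀ y : X}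
    (hinj : Set.InjOn (fun a : G => ρ a x₀) P) {a : G} (ha : a ∈ P) (ha1 : a ≠ 1)
    (hy : Function.IsFixedPt (ρ a) y) {c : G} (hc : c ∈ P) : ρ c x₀ ≠ y := by
  intro h
  have hca : ρ (c * a) x₀ = ρ c x₀ := by rw [← hρm a ha c hc, h, hy]
  exact ha1 (mul_eq_left.1 (hinj (hPmul c hc a ha) hc hca))

variable [TopologicalSpace X] [CompactSpace X] [T2Space X]

theorem exists_range_subset_of_commonRange_subset (hP : P.Nonempty)
    (hPmul : ∀ a ∈ P, ∀ b ∈ P, a * b ∈ P)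
    (hore : ∀ a ∈ P, ∀ b ∈ P, ∃ p ∈ P, ∃ q ∈ P, p * a = q * b)
    (hρc : ∀ a ∈ P, Continuous (ρ a))
    (hρm : ∀ a ∈ P, ∀ b ∈ P, ∀ x : X, ρ a (ρ b x) = ρ (b * a) x) {U : Set X}
    (hU : IsOpen U) (hsub : commonRange P ρ ⊆ U) : ∃ c ∈ P, Set.range (ρ c) ⊆ U := by
  have : Nonempty P := hP.to_subtype
  have hdir : Directed (· ⊇ ·) fun c : P => Set.range (ρ c) := by
    rintro ⟨c₁, hc₁⟩ ⟨c₂, hc₂⟩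
    obtain ⟨p, hp, q, hq, hpq⟩ := hore c₁ hc₁ c₂ hc₂
    refine ⟨⟨p * c₁, hPmul p hp c₁ hc₁⟩, range_mul_subset hρm hc₁ hp, ?_⟩
    show Set.range (ρ (p * c₁)) ⊆ _
    rw [hpq]
    exact range_mul_subset hρm hc₂ hq
  have hcompact : ∀ c : P, IsCompact (Set.range (ρ c)) := fun c => isCompact_range (hρc c c.2)
  obtain ⟨⟨c, hc⟩, hcU⟩ := exists_subset_nhds_of_isCompact' hdir hcompact
    (fun c => (hcompact c).isClosed) fun x hx =>
      hU.mem_nhds (hsub (Set.mem_iInter₂.2 fun c hc => Set.mem_iInter.1 hx ⟨c, hc⟩))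
  exact ⟨c, hc, hcU⟩

theorem tendsto_orbit_cofinite_nhdsSet_commonRange (hP : P.Nonempty)
    (hPmul : ∀ a ∈ P, ∀ b ∈ P, a * b ∈ P)
    (hfin : ∀ a ∈ P, (P \ ((· * a) '' P)).Finite)
    (hore : ∀ a ∈ P, ∀ b ∈ P, ∃ p ∈ P, ∃ q ∈ P, p * a = q * b)
    (hρc : ∀ a ∈ P, Continuous (ρ a))
    (hρm : ∀ a ∈ P, ∀ b ∈ P, ∀ x : X, ρ a (ρ b x) = ρ (b * a) x) (x₀ : X) :
    Tendsto (fun b : P => ρ b x₀) cofinite (𝓝ˢ (commonRange P ρ)) := by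
  intro s hs
  obtain ⟨U, hU, hsubU, hUs⟩ := mem_nhdsSet_iff_exists.1 hs
  obtain ⟨c, hc, hcU⟩ :=
    exists_range_subset_of_commonRange_subset hP hPmul hore hρc hρm hU hsubU
  rw [mem_map, mem_cofinite]
  refine ((hfin c hc).preimage Subtype.val_injective.injOn).subset fun b hb => ⟨b.2, ?_⟩
  rintro ⟨d, hd, hdb⟩
  have hb_mem : ρ b x₀ ∈ Set.range (ρ c) := hdb ▸ range_mul_subset hρm hc hd ⟨x₀, rfl⟩
  exact hb (hUs (hcU hb_mem))

end RightAction

theorem stmt_18_general {G : Type*} [Group G]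
    [TopologicalSpace G] [DiscreteTopology G]
    (P : Set G) (hP1 : (1 : G) ∈ P) (hPmul : ∀ a ∈ P, ∀ b ∈ P, a * b ∈ P)
    (hPG : ∀ g : G, ∃ a ∈ P, ∃ b ∈ P, g = a * b⁻¹)
    (hPinf : P.Infinite)
    (hfin : ∀ a ∈ P, (P \ ((· * a) '' P)).Finite)
    {X : Type*} [TopologicalSpace X] [CompactSpace X] [T2Space X]
    (ρ : G → X → X)
    (hρc : ∀ a ∈ P, Continuous (ρ a))
    (hρi : ∀ a ∈ P, Function.Injective (ρ a))
    (hρm : ∀ a ∈ P, ∀ b ∈ P, ∀ x : X, ρ a (ρ b x) = ρ (b * a) x)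
    (xinf : X) (hxinf : Qset P ρ xinf = Set.univ)
    (huniq : ∀ x : X, Qset P ρ x = Set.univ → x = xinf)
    (x₀ : X) (hinj : Set.InjOn (fun a : G => ρ a x₀) P)
    (hdense : Dense ((fun a : G => ρ a x₀) '' P)) :
    ∃ Λ : OnePoint ↥P ≃ₜ X,
      (∀ b : ↥P, Λ (OnePoint.some b) = ρ b.1 x₀) ∧
      (Λ OnePoint.infty = xinf) ∧
      (∀ a ∈ P, ρ a xinf = xinf) ∧
      (∀ (a : G) (ha : a ∈ P) (b : ↥P),
        ρ a (Λ (OnePoint.some b)) =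
          Λ (OnePoint.some (⟨b.1 * a, hPmul b.1 b.2 a ha⟩ : ↥P))) ∧
      (∀ a ∈ P, ρ a (Λ OnePoint.infty) = Λ OnePoint.infty) := by
  have hore : ∀ a ∈ P, ∀ b ∈ P, ∃ p ∈ P, ∃ q ∈ P, p * a = q * b :=
    fun a ha b hb => exists_mul_eq_mul_of_finite_diff hPinf (hfin a ha) (hfin b hb)
  have hcommon : commonRange P ρ = {xinf} :=
    Set.eq_singleton_iff_unique_mem.2 ⟨mem_commonRange_of_Qset_eq_univ hρi hρm hxinf,
      fun x hx => huniq x (Qset_eq_univ_of_mem_commonRange hPG hore hρm hx)⟩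
  have hfix : ∀ a ∈ P, ρ a xinf = xinf := fun a ha => by
    simpa only [hcommon, Set.mapsTo_singleton, Set.mem_singleton_iff]
      using mapsTo_commonRange hore hρm ha
  have htend : Tendsto (fun b : P => ρ b x₀) cofinite (𝓝 xinf) := by
    simpa only [hcommon, nhdsSet_singleton] using
      tendsto_orbit_cofinite_nhdsSet_commonRange ⟨1, hP1⟩ hPmul hfin hore hρc hρm x₀
  obtain ⟨a, ha, ha1⟩ := hPinf.nontrivial.exists_ne 1
  have hmiss : xinf ∉ Set.range fun b : P => ρ b x₀ := fun ⟨b, hb⟩ =>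
    orbit_ne_of_isFixedPt hPmul hρm hinj ha ha1 (hfix a ha) b.2 hb
  obtain ⟨Λ, hΛ, hΛinf⟩ := OnePoint.exists_homeomorph_of_tendsto_cofinite hinj.injective
    (by rwa [DenseRange, Set.range_domRestrict]) hmiss htend
  refine ⟨Λ, hΛ, hΛinf, hfix, fun a ha b => ?_, fun a ha => ?_⟩
  · rw [hΛ, hΛ]
    exact hρm a ha b b.2 x₀
  · rw [hΛinf]
    exact hfix a ha

/-- assume `P` is infinite and `P \ Pa` is finite for every `a ∈ P`. Let
`ρ` be a right injective action of `P` on a second-countable compact Hausdorff space `X`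
with open image sets, admitting (i) a unique point `x_∞` with `Q_{x_∞} = G`, and (ii) a
point `x₀` such that `a ↦ ρ_a(x₀)` is injective on `P` with dense range. Then
`Λ : P_∞ → X`, `Λ(a) = ρ_a(x₀)`, `Λ(∞) = x_∞`, is a homeomorphism from the one-point
compactification `P_∞ = P ∪ {∞}` of `P` onto `X` intertwining the action
`σ_a(b) = ba`, `σ_a(∞) = ∞` with `ρ`; in particular `ρ_a(x_∞) = x_∞` for all `a ∈ P`,
and `P ↷_σ P_∞` and `P ↷_ρ X` are conjugate. -/
theorem stmt_18 {G : Type*} [Group G] [Countable G]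
    [TopologicalSpace G] [DiscreteTopology G]
    (P : Set G) (hP1 : (1 : G) ∈ P) (hPmul : ∀ a ∈ P, ∀ b ∈ P, a * b ∈ P)
    (hPG : ∀ g : G, ∃ a ∈ P, ∃ b ∈ P, g = a * b⁻¹)
    (hPinf : P.Infinite)
    (hfin : ∀ a ∈ P, (P \ ((· * a) '' P)).Finite)
    {X : Type*} [TopologicalSpace X] [CompactSpace X] [T2Space X]
    [SecondCountableTopology X]
    (ρ : G → X → X)
    (hρc : ∀ a ∈ P, Continuous (ρ a))
    (hρi : ∀ a ∈ P, Function.Injective (ρ a))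
    (hρ1 : ρ 1 = id)
    (hρm : ∀ a ∈ P, ∀ b ∈ P, ∀ x : X, ρ a (ρ b x) = ρ (b * a) x)
    (hρopen : ∀ a ∈ P, IsOpen (Set.range (ρ a)))
    (xinf : X) (hxinf : Qset P ρ xinf = Set.univ)
    (huniq : ∀ x : X, Qset P ρ x = Set.univ → x = xinf)
    (x₀ : X) (hinj : Set.InjOn (fun a : G => ρ a x₀) P)
    (hdense : Dense ((fun a : G => ρ a x₀) '' P)) :
    ∃ Λ : OnePoint ↥P ≃ₜ X,
      (∀ b : ↥P, Λ (OnePoint.some b) = ρ b.1 x₀) ∧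
      (Λ OnePoint.infty = xinf) ∧
      (∀ a ∈ P, ρ a xinf = xinf) ∧
      (∀ (a : G) (ha : a ∈ P) (b : ↥P),
        ρ a (Λ (OnePoint.some b)) =
          Λ (OnePoint.some (⟨b.1 * a, hPmul b.1 b.2 a ha⟩ : ↥P))) ∧
      (∀ a ∈ P, ρ a (Λ OnePoint.infty) = Λ OnePoint.infty) :=
  stmt_18_general P hP1 hPmul hPG hPinf hfin ρ hρc hρi hρm xinf hxinf huniq x₀ hinj hdense
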